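/- Let β ∈ ℝⁿ, α², ν, t₀ > 0, 0 < μ < 1, z(ξ) = α²‖ξ‖² + i(β·ξ) + ν, Λ(ξ) = z(ξ)/(1 - e^{-z(ξ)t₀}), and R³_μ(ξ) = Λ(ξ)/e^{μ²‖ξ‖²/4}. Then for all ξ ∈ ℝⁿ, |R³_μ(ξ)| < M₃/μ² where M₃ = max{(α² + ν)(8 + 4√n‖β‖_∞/√(α²ν)), 8/t₀ + 4√n‖β‖_∞/(t₀√(α²ν))}. -/

import Mathlib

/-!
Write `z = a + ib` with `a = α²‖ξ‖² + ν`. By AM-GM `2√(α²ν)‖ξ‖ ≤ a`, so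
`|b| ≤ ‖β‖‖ξ‖ ≤ a · √n‖β‖_∞ / (2√(α²ν))`, i.e. `|z|` is at most a fixed multiple of `a`.
Since `|1 - e^{-zt₀}| ≥ 1 - e^{-at₀}` and `x / (1 - e^{-x}) ≤ 1 + x`, `|Λ(ξ)|` is bounded by
that multiple of `a + 1/t₀ ≤ max(α² + ν, 1/t₀)(2 + ‖ξ‖²)`, and `e^{μ²‖ξ‖²/4} ≥ 1 + μ²‖ξ‖²/4`
absorbs the factor `2 + ‖ξ‖²` at the cost of `8/μ²`.
-/

open Real

theorem EuclideanSpace.norm_le_sqrt_card_mul_iSup_abs {ι : Type*} [Fintype ι]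
    (β : EuclideanSpace ℝ ι) : ‖β‖ ≤ √(Fintype.card ι) * ⨆ i, |β i| := by
  have hβ : ∀ i, |β i| ≤ ⨆ i, |β i| := le_ciSup (Set.finite_range _).bddAbove
  have hsum : ∑ i, ‖β i‖ ^ 2 ≤ Fintype.card ι * (⨆ i, |β i|) ^ 2 := by
    calc ∑ i, ‖β i‖ ^ 2 ≤ ∑ _i : ι, (⨆ i, |β i|) ^ 2 :=
          Finset.sum_le_sum fun i _ => pow_le_pow_left₀ (abs_nonneg _) (hβ i) 2
      _ = Fintype.card ι * (⨆ i, |β i|) ^ 2 := by simp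
  rw [EuclideanSpace.norm_eq, ← Real.sqrt_sq (Real.iSup_nonneg fun i => abs_nonneg (β i)),
    ← Real.sqrt_mul (Nat.cast_nonneg _)]
  exact Real.sqrt_le_sqrt hsum

theorem two_mul_sqrt_mul_mul_le {p q : ℝ} (hp : 0 ≤ p) (hq : 0 ≤ q) (x : ℝ) :
    2 * √(p * q) * x ≤ p * x ^ 2 + q := by
  rw [Real.sqrt_mul hp]
  nlinarith [sq_nonneg (√p * x - √q), Real.sq_sqrt hp, Real.sq_sqrt hq]

theorem abs_inner_div_le {E : Type*} [NormedAddCommGroup E] [InnerProductSpace ℝ E]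
    {p q : ℝ} (hp : 0 < p) (hq : 0 < q) (β ξ : E) :
    |inner ℝ β ξ| / (p * ‖ξ‖ ^ 2 + q) ≤ ‖β‖ / (2 * √(p * q)) := by
  have hpq : 0 < √(p * q) := Real.sqrt_pos.2 (mul_pos hp hq)
  rw [div_le_div_iff₀ (by positivity) (by positivity)]
  calc |inner ℝ β ξ| * (2 * √(p * q)) ≤ ‖β‖ * ‖ξ‖ * (2 * √(p * q)) := by
        gcongr; exact abs_real_inner_le_norm β ξ
    _ = ‖β‖ * (2 * √(p * q) * ‖ξ‖) := by ring
    _ ≤ ‖β‖ * (p * ‖ξ‖ ^ 2 + q) := by gcongr; exact two_mul_sqrt_mul_mul_le hp.le hq.le _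

theorem Complex.one_sub_exp_re_le_norm_one_sub_exp (w : ℂ) :
    1 - Real.exp w.re ≤ ‖1 - Complex.exp w‖ := by
  simpa [Complex.norm_exp] using norm_sub_norm_le (1 : ℂ) (Complex.exp w)

theorem div_one_sub_exp_neg_le {x : ℝ} (hx : 0 < x) : x / (1 - Real.exp (-x)) ≤ 1 + x := by
  have hexp : Real.exp (-x) * Real.exp x = 1 := by rw [← Real.exp_add]; simp
  have hprod : (1 + x) * Real.exp (-x) ≤ 1 := by
    nlinarith [Real.add_one_le_exp x, Real.exp_pos (-x)]
  rw [div_le_iff₀ (by linarith [Real.exp_lt_one_iff.2 (neg_neg_of_pos hx)])]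
  linarith

theorem Complex.norm_div_one_sub_exp_neg_mul_le {z : ℂ} (hz : 0 < z.re) {t : ℝ} (ht : 0 < t) :
    ‖z / (1 - Complex.exp (-(z * t)))‖ ≤ (1 + |z.im| / z.re) * (z.re + 1 / t) := by
  have hre : (-(z * t)).re = -(z.re * t) := by simp
  have hden : 0 < 1 - Real.exp (-(z.re * t)) := by
    linarith [Real.exp_lt_one_iff.2 (neg_neg_of_pos (mul_pos hz ht))]
  have hquot : z.re * t / (1 - Real.exp (-(z.re * t))) ≤ 1 + z.re * t :=
    div_one_sub_exp_neg_le (mul_pos hz ht)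
  calc ‖z / (1 - Complex.exp (-(z * t)))‖
      ≤ (z.re + |z.im|) / (1 - Real.exp (-(z.re * t))) := by
        rw [norm_div]
        gcongr
        · simpa [abs_of_pos hz] using Complex.norm_le_abs_re_add_abs_im z
        · simpa [hre] using Complex.one_sub_exp_re_le_norm_one_sub_exp (-(z * t))
    _ = (1 + |z.im| / z.re) * (z.re * t / (1 - Real.exp (-(z.re * t)))) / t := by
        field_simp
    _ ≤ (1 + |z.im| / z.re) * (1 + z.re * t) / t := by gcongr
    _ = (1 + |z.im| / z.re) * (z.re + 1 / t) := by field_simp; ring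

theorem two_add_sq_div_exp_lt {μ : ℝ} (hμ0 : 0 < μ) (hμ2 : μ < 2) (x : ℝ) :
    (2 + x ^ 2) / Real.exp (μ ^ 2 * x ^ 2 / 4) < 8 / μ ^ 2 := by
  have hexp := Real.add_one_le_exp (μ ^ 2 * x ^ 2 / 4)
  rw [div_lt_div_iff₀ (Real.exp_pos _) (by positivity)]
  nlinarith [mul_nonneg (sq_nonneg μ) (sq_nonneg x), mul_pos hμ0 hμ0]

theorem mul_sq_add_add_le_max_mul {p q : ℝ} (hp : 0 ≤ p) (hq : 0 ≤ q) (r x : ℝ) :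
    p * x ^ 2 + q + r ≤ max (p + q) r * (2 + x ^ 2) := by
  have hpM : p ≤ max (p + q) r := le_trans (by linarith) (le_max_left _ _)
  nlinarith [le_max_left (p + q) r, le_max_right (p + q) r,
    mul_le_mul_of_nonneg_right hpM (sq_nonneg x)]

theorem R17_bound {n : ℕ} (β : EuclideanSpace ℝ (Fin n))
    (α2 ν t0 μ : ℝ) (hα : 0 < α2) (hν : 0 < ν) (ht : 0 < t0)
    (hμ0 : 0 < μ) (hμ1 : μ < 1) :
    ∀ ξ : EuclideanSpace ℝ (Fin n),
      ‖
        (((((α2 * ‖ξ‖ ^ 2 + ν : ℝ) : ℂ) + (inner ℝ β ξ : ℝ) * Complex.I) /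
            (1 - Complex.exp
              (-((((α2 * ‖ξ‖ ^ 2 + ν : ℝ) : ℂ) + (inner ℝ β ξ : ℝ) * Complex.I) * t0)))) /
          ((Real.exp (μ ^ 2 * ‖ξ‖ ^ 2 / 4) : ℝ) : ℂ))‖ <
        (max ((α2 + ν) * (8 + 4 * Real.sqrt n * (⨆ i, |β i|) / Real.sqrt (α2 * ν))) (8 / t0 + 4 * Real.sqrt n * (⨆ i, |β i|) / (t0 * Real.sqrt (α2 * ν)))) / μ ^ 2 := by
  intro ξ
  rw [← Complex.mk_eq_add_mul_I]
  set a := α2 * ‖ξ‖ ^ 2 + ν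
  set c := √n * (⨆ i, |β i|) / √(α2 * ν)
  set M := max (α2 + ν) (1 / t0)
  have hc : 0 ≤ c := by
    have := Real.iSup_nonneg fun i => abs_nonneg (β i)
    positivity
  have hM : 0 < M := lt_of_lt_of_le (by positivity) (le_max_left _ _)
  have him : |inner ℝ β ξ| / a ≤ c / 2 := by
    have hβ := EuclideanSpace.norm_le_sqrt_card_mul_iSup_abs β
    rw [Fintype.card_fin] at hβ
    calc |inner ℝ β ξ| / a ≤ ‖β‖ / (2 * √(α2 * ν)) := abs_inner_div_le hα hν β ξ
      _ ≤ √n * (⨆ i, |β i|) / (2 * √(α2 * ν)) := by gcongr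
      _ = c / 2 := by ring
  have hmax : max ((α2 + ν) * (8 + 4 * √n * (⨆ i, |β i|) / √(α2 * ν)))
      (8 / t0 + 4 * √n * (⨆ i, |β i|) / (t0 * √(α2 * ν))) = M * (8 + 4 * c) := by
    rw [max_mul_of_nonneg _ _ (by positivity)]
    congr 1 <;> (simp only [c]; field_simp)
  rw [hmax, norm_div, Complex.norm_real, Real.norm_of_nonneg (Real.exp_pos _).le]
  calc ‖(⟨a, inner ℝ β ξ⟩ / (1 - Complex.exp (-(⟨a, inner ℝ β ξ⟩ * t0))) : ℂ)‖
        / Real.exp (μ ^ 2 * ‖ξ‖ ^ 2 / 4)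
      ≤ (1 + c / 2) * M * ((2 + ‖ξ‖ ^ 2) / Real.exp (μ ^ 2 * ‖ξ‖ ^ 2 / 4)) := by
        rw [mul_div_assoc', mul_assoc]
        gcongr
        calc _ ≤ (1 + |inner ℝ β ξ| / a) * (a + 1 / t0) :=
              Complex.norm_div_one_sub_exp_neg_mul_le (z := ⟨a, _⟩) (by positivity) ht
          _ ≤ (1 + c / 2) * (M * (2 + ‖ξ‖ ^ 2)) := by
              gcongr; exact mul_sq_add_add_le_max_mul hα.le hν.le _ _
    _ < (1 + c / 2) * M * (8 / μ ^ 2) :=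
        mul_lt_mul_of_pos_left (two_add_sq_div_exp_lt hμ0 (by linarith) _) (by positivity)
    _ = M * (8 + 4 * c) / μ ^ 2 := by ring
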